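/- For the Lie algebra g₄₁₂ with single nonzero bracket [T,Z]=Z, fix α,β,γ ∈ ℝ with γ ≠ 0, and define Ã_A(p,q) = dp + cγe^q + aα + bβ for A = aX+bY+cZ+dT. Then the map A ↦ Ã_A satisfies {Ã_A, Ã_B} = Ã_{[A,B]} for the standard Poisson bracket on ℝ², i.e., it is a Lie algebra homomorphism into (C^∞(ℝ²), {·,·}). -/

import Mathlib

/-- The Hamiltonian function on the generic orbit of `g₄₁₂`, for
`A = aX+bY+cZ+dT`: `Ã_A(p,q) = dp + cγe^q + aα + bβ`. -/
noncomputable def Atil412 (α β γ : ℝ) (a b c d : ℝ) : ℝ → ℝ → ℝ := fun p q =>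
  d * p + c * γ * Real.exp q + a * α + b * β

lemma derivP (α β γ a b c d q p : ℝ) :
    deriv (fun p' => Atil412 α β γ a b c d p' q) p = d := by
  have : HasDerivAt (fun p' => Atil412 α β γ a b c d p' q) d p := by
    simpa [Atil412] using (((hasDerivAt_id p).const_mul d).add_const
      (c * γ * Real.exp q)).add_const (a * α) |>.add_const (b * β)
  exact this.deriv

lemma derivQ (α β γ a b c d p q : ℝ) :
    deriv (fun q' => Atil412 α β γ a b c d p q') q = c * γ * Real.exp q := by
  have : HasDerivAt (fun q' => Atil412 α β γ a b c d p q') (c * γ * Real.exp q) q := by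
    have := ((Real.hasDerivAt_exp q).const_mul (c * γ)).const_add (d * p)
    simpa [Atil412, add_assoc, mul_comm, mul_assoc] using
      (this.add_const (a * α)).add_const (b * β)
  exact this.deriv

/-- For `g₄₁₂` (single nonzero bracket `[T,Z]=Z`, so `[A,B] = (dc'−d'c)Z`),
with `γ ≠ 0`, the map `A ↦ Ã_A` is a Lie algebra homomorphism into
`(C^∞(ℝ²), {·,·})`: `{Ã_A, Ã_B} = Ã_{[A,B]}`. -/
theorem stmt_11 (α β γ : ℝ) (hγ : γ ≠ 0)
    (a b c d a' b' c' d' : ℝ) (p q : ℝ) :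
    deriv (fun p' => Atil412 α β γ a b c d p' q) p *
        deriv (fun q' => Atil412 α β γ a' b' c' d' p q') q
      - deriv (fun q' => Atil412 α β γ a b c d p q') q *
        deriv (fun p' => Atil412 α β γ a' b' c' d' p' q) p
      = Atil412 α β γ 0 0 (d * c' - d' * c) 0 p q := by
  rw [derivP, derivP, derivQ, derivQ, Atil412]
  ring
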